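/- arXiv:1703.00946 — 2 statements merged into one kernel-verified Lean document; each statement's English description precedes it below -/
import Mathlib

section
/- Let β and γ be real numbers with β > 1 and 0 ≤ γ ≤ β. Then there is a constant C = C(β,γ) such that for all k₁, k₂ ∈ ℤ one has ∑_{n∈ℤ} ⟨n-k₁⟩^{-β} ⟨n-k₂⟩^{-γ} ≤ C ⟨k₁-k₂⟩^{-γ}. -/
/-!
Split the sum according to which of `n - k₁`, `n - k₂` is larger in absolute value. Since
`(n - k₂) - (n - k₁) = k₁ - k₂`, the larger one, call it `M`, satisfies `⟨k₁ - k₂⟩ ≤ 2 ⟨M⟩`;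
as `γ ≤ β` we may put the weight `-γ` on `M` and `-β` on the smaller one `m`, so each term is at
most `2^γ ⟨k₁ - k₂⟩^{-γ} ⟨m⟩^{-β}`. Both `∑ₙ ⟨n - kᵢ⟩^{-β}` equal `∑ₙ ⟨n⟩^{-β} < ∞` since `β > 1`.
-/

/-- Japanese bracket `⟨x⟩ = (1+x²)^{1/2}`. -/
noncomputable def jb (x : ℝ) : ℝ := Real.sqrt (1 + x ^ 2)

lemma jb_pos (x : ℝ) : 0 < jb x :=
  Real.sqrt_pos.2 (by positivity)

lemma jb_rpow_pos (x s : ℝ) : 0 < jb x ^ s :=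
  Real.rpow_pos_of_pos (jb_pos x) s

lemma abs_le_jb (x : ℝ) : |x| ≤ jb x :=
  Real.abs_le_sqrt (by linarith)

lemma jb_le_jb {x y : ℝ} (h : |x| ≤ |y|) : jb x ≤ jb y :=
  Real.sqrt_le_sqrt (by linarith [sq_le_sq.2 h])

lemma jb_sub_comm (x y : ℝ) : jb (x - y) = jb (y - x) := by
  rw [jb, jb, ← neg_sub, neg_sq]

lemma jb_sub_le_two_mul {x y : ℝ} (h : |y| ≤ |x|) : jb (x - y) ≤ 2 * jb x := by
  have hsub : (x - y) ^ 2 ≤ (2 * x) ^ 2 :=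
    sq_le_sq.2 (by rw [abs_mul, abs_two]; linarith [abs_sub x y])
  rw [jb, Real.sqrt_le_iff]
  refine ⟨by linarith [jb_pos x], ?_⟩
  rw [mul_pow, jb, Real.sq_sqrt (by positivity)]
  linarith

lemma rpow_neg_le_mul_rpow_neg_of_le_mul {u v c γ : ℝ} (hu : 0 < u) (hv : 0 < v) (hc : 0 < c)
    (hvu : v ≤ c * u) (hγ : 0 ≤ γ) : u ^ (-γ) ≤ c ^ γ * v ^ (-γ) :=
  calc u ^ (-γ) = c ^ γ * (c * u) ^ (-γ) := by
        rw [Real.mul_rpow hc.le hu.le, ← mul_assoc, ← Real.rpow_add hc, add_neg_cancel,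
          Real.rpow_zero, one_mul]
    _ ≤ c ^ γ * v ^ (-γ) :=
        mul_le_mul_of_nonneg_left (Real.rpow_le_rpow_of_nonpos hv hvu (neg_nonpos.2 hγ))
          (by positivity)

lemma rpow_neg_mul_rpow_neg_le_swap {x y β γ : ℝ} (hy : 0 < y) (hyx : y ≤ x) (hγβ : γ ≤ β) :
    x ^ (-β) * y ^ (-γ) ≤ x ^ (-γ) * y ^ (-β) := by
  have hx : 0 < x := hy.trans_le hyx
  calc x ^ (-β) * y ^ (-γ) = x ^ (-γ) * (x ^ (γ - β) * y ^ (-γ)) := by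
        rw [← mul_assoc, ← Real.rpow_add hx]; ring_nf
    _ ≤ x ^ (-γ) * (y ^ (γ - β) * y ^ (-γ)) := by
        have := Real.rpow_le_rpow_of_nonpos hy hyx (sub_nonpos.2 hγβ)
        gcongr
    _ = x ^ (-γ) * y ^ (-β) := by
        rw [← Real.rpow_add hy]; ring_nf

lemma jb_rpow_neg_mul_le {β γ : ℝ} (hγ0 : 0 ≤ γ) (hγβ : γ ≤ β) (a b : ℝ) :
    jb a ^ (-β) * jb b ^ (-γ) ≤ 2 ^ γ * jb (b - a) ^ (-γ) * (jb a ^ (-β) + jb b ^ (-β)) := by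
  have hbound {M : ℝ} (hM : jb (b - a) ≤ 2 * jb M) :
      jb M ^ (-γ) ≤ 2 ^ γ * jb (b - a) ^ (-γ) :=
    rpow_neg_le_mul_rpow_neg_of_le_mul (jb_pos M) (jb_pos _) two_pos hM hγ0
  have := jb_rpow_pos a (-β)
  have := jb_rpow_pos b (-β)
  have := jb_rpow_pos (b - a) (-γ)
  rcases le_total |a| |b| with hab | hba
  · calc jb a ^ (-β) * jb b ^ (-γ) ≤ jb a ^ (-β) * (2 ^ γ * jb (b - a) ^ (-γ)) := by
          gcongr
          exact hbound (jb_sub_le_two_mul hab)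
      _ ≤ 2 ^ γ * jb (b - a) ^ (-γ) * (jb a ^ (-β) + jb b ^ (-β)) := by
          rw [mul_comm]; gcongr; linarith
  · calc jb a ^ (-β) * jb b ^ (-γ) ≤ jb a ^ (-γ) * jb b ^ (-β) :=
          rpow_neg_mul_rpow_neg_le_swap (jb_pos b) (jb_le_jb hba) hγβ
      _ ≤ 2 ^ γ * jb (b - a) ^ (-γ) * jb b ^ (-β) := by
          gcongr
          exact hbound (jb_sub_comm b a ▸ jb_sub_le_two_mul hba)
      _ ≤ 2 ^ γ * jb (b - a) ^ (-γ) * (jb a ^ (-β) + jb b ^ (-β)) := by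
          gcongr; linarith

lemma summable_jb_intCast_rpow_neg {β : ℝ} (hβ : 1 < β) :
    Summable fun n : ℤ => jb n ^ (-β) := by
  refine (Real.summable_abs_int_rpow hβ).of_norm_bounded_eventually ?_
  filter_upwards [Filter.eventually_cofinite_ne 0] with n hn
  rw [Real.norm_of_nonneg (jb_rpow_pos _ _).le]
  exact Real.rpow_le_rpow_of_nonpos (abs_pos.2 (Int.cast_ne_zero.2 hn)) (abs_le_jb _)
    (by linarith)

lemma tsum_comp_sub_intCast {α : Type*} [AddCommMonoid α] [TopologicalSpace α] (f : ℝ → α)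
    (k : ℤ) : ∑' n : ℤ, f (n - k) = ∑' n : ℤ, f n := by
  simpa using (Equiv.subRight k).tsum_eq (fun n : ℤ => f n)

/-- For `β > 1`, `0 ≤ γ ≤ β`, there is `C = C(β,γ)` such that for all
`k₁ k₂ : ℤ`, `∑_{n∈ℤ} ⟨n-k₁⟩^{-β} ⟨n-k₂⟩^{-γ} ≤ C ⟨k₁-k₂⟩^{-γ}`. -/
theorem stmt0 (β γ : ℝ) (hβ : 1 < β) (hγ0 : 0 ≤ γ) (hγβ : γ ≤ β) :
    ∃ C : ℝ, 0 < C ∧ ∀ k₁ k₂ : ℤ,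
      (∑' n : ℤ, ENNReal.ofReal
          (jb ((n : ℝ) - (k₁ : ℝ)) ^ (-β) * jb ((n : ℝ) - (k₂ : ℝ)) ^ (-γ)))
        ≤ ENNReal.ofReal (C * jb ((k₁ : ℝ) - (k₂ : ℝ)) ^ (-γ)) := by
  have hsum := summable_jb_intCast_rpow_neg hβ
  set S := ∑' n : ℤ, jb n ^ (-β)
  have hS : 0 < S := hsum.tsum_pos (fun _ => (jb_rpow_pos _ _).le) 0 (jb_rpow_pos _ _)
  have hshift (k : ℤ) : ∑' n : ℤ, ENNReal.ofReal (jb (n - k) ^ (-β)) = ENNReal.ofReal S := by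
    rw [tsum_comp_sub_intCast (fun x => ENNReal.ofReal (jb x ^ (-β))),
      ENNReal.ofReal_tsum_of_nonneg (fun _ => (jb_rpow_pos _ _).le) hsum]
  refine ⟨2 ^ γ * (2 * S), by positivity, fun k₁ k₂ => ?_⟩
  set K := 2 ^ γ * jb ((k₁ : ℝ) - k₂) ^ (-γ) with hK_def
  have hK : 0 ≤ K := mul_nonneg (by positivity) (jb_rpow_pos _ _).le
  calc _ ≤ ∑' n : ℤ, ENNReal.ofReal K *
          (ENNReal.ofReal (jb (n - k₁) ^ (-β)) + ENNReal.ofReal (jb (n - k₂) ^ (-β))) := by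
        refine ENNReal.tsum_le_tsum fun n => ?_
        rw [← ENNReal.ofReal_add (jb_rpow_pos _ _).le (jb_rpow_pos _ _).le,
          ← ENNReal.ofReal_mul hK]
        refine ENNReal.ofReal_le_ofReal ?_
        simpa only [sub_sub_sub_cancel_left] using
          jb_rpow_neg_mul_le hγ0 hγβ ((n : ℝ) - k₁) ((n : ℝ) - k₂)
    _ = ENNReal.ofReal K * (ENNReal.ofReal S + ENNReal.ofReal S) := by
        rw [ENNReal.tsum_mul_left, ENNReal.tsum_add, hshift, hshift]
    _ = _ := by
        rw [← ENNReal.ofReal_add hS.le hS.le, ← ENNReal.ofReal_mul hK, hK_def]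
        ring_nf
end

section
/- Fix α ∈ (1/2, 1]. There is a constant c = c(α) > 0 such that for all real numbers m, n, k one has ||k+n|^{2α} - |k+m+n|^{2α} + |k+m|^{2α} - |k|^{2α}| ≥ c · |m| |n| / (|m| + |n| + |k|)^{2-2α}, where in the case m = n = k = 0 the right-hand side is interpreted as 0. -/
open Real Set Filter

-- signed power: for x ≥ 0 this is x^γ
lemma signed_pow_of_nonneg {γ x : ℝ} (hγ : γ ≠ 0) (hx : 0 ≤ x) :
    |x| ^ (γ - 1) * x = x ^ γ := by
  rcases hx.eq_or_lt with rfl | hx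
  · simp [Real.zero_rpow hγ]
  · rw [abs_of_pos hx, ← Real.rpow_add_one hx.ne' (γ - 1)]
    ring_nf

lemma signed_pow_of_nonpos {γ x : ℝ} (hγ : γ ≠ 0) (hx : x ≤ 0) :
    |x| ^ (γ - 1) * x = -((-x) ^ γ) := by
  have h : |x| ^ (γ - 1) * (-x) = (-x) ^ γ :=
    (abs_neg x ▸ signed_pow_of_nonneg hγ (neg_nonneg.mpr hx))
  linarith [h]

-- Case 1 core: MVT bound for 0 ≤ a ≤ b
lemma case1 {γ a b : ℝ} (hγ0 : 0 < γ) (hγ1 : γ ≤ 1) (ha : 0 ≤ a) (hab : a ≤ b) :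
    γ * (b - a) * (a + b) ^ (γ - 1) ≤ b ^ γ - a ^ γ := by
  rcases hab.eq_or_lt with rfl | hab
  · simp
  · have hb : 0 < b := lt_of_le_of_lt ha hab
    obtain ⟨ξ, hξ, hsl⟩ := exists_hasDerivAt_eq_slope (fun x : ℝ => x ^ γ)
      (fun x => γ * x ^ (γ - 1)) hab
      (fun x _ => (Real.continuousAt_rpow_const x γ (Or.inr hγ0.le)).continuousWithinAt)
      (fun x hx => Real.hasDerivAt_rpow_const (Or.inl (lt_of_le_of_lt ha hx.1).ne'))
    have hξ0 : 0 < ξ := lt_of_le_of_lt ha hξ.1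
    have h1 : (a + b) ^ (γ - 1) ≤ ξ ^ (γ - 1) :=
      Real.rpow_le_rpow_of_nonpos hξ0 (by linarith [hξ.2]) (by linarith)
    have h2 : b ^ γ - a ^ γ = (b - a) * (γ * ξ ^ (γ - 1)) := by
      have hsl' : γ * ξ ^ (γ - 1) = (b ^ γ - a ^ γ) / (b - a) := hsl
      rw [eq_div_iff (by linarith : b - a ≠ 0)] at hsl'
      linarith [hsl']
    rw [h2]
    have : γ * (a + b) ^ (γ - 1) ≤ γ * ξ ^ (γ - 1) := by
      exact mul_le_mul_of_nonneg_left h1 hγ0.le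
    nlinarith [sub_pos.mpr hab]

-- subadditivity of rpow for exponent ≤ 1 on nonneg reals
lemma subadd {γ x y : ℝ} (hγ0 : 0 < γ) (hγ1 : γ ≤ 1) (hx : 0 ≤ x) (hy : 0 ≤ y) :
    (x + y) ^ γ ≤ x ^ γ + y ^ γ := by
  have h := NNReal.rpow_add_le_add_rpow x.toNNReal y.toNNReal hγ0.le hγ1
  have := NNReal.coe_le_coe.mpr h
  push_cast [NNReal.coe_rpow] at this
  rwa [Real.coe_toNNReal x hx, Real.coe_toNNReal y hy] at this

-- key monotone difference bound
lemma key {γ a b : ℝ} (hγ0 : 0 < γ) (hγ1 : γ ≤ 1) (hab : a ≤ b) :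
    γ * (b - a) * (|a| + |b|) ^ (γ - 1) ≤ |b| ^ (γ - 1) * b - |a| ^ (γ - 1) * a := by
  rcases le_or_gt 0 a with ha | ha
  · have hb : 0 ≤ b := ha.trans hab
    rw [signed_pow_of_nonneg hγ0.ne' ha, signed_pow_of_nonneg hγ0.ne' hb,
      abs_of_nonneg ha, abs_of_nonneg hb]
    exact case1 hγ0 hγ1 ha hab
  · rcases le_or_gt b 0 with hb | hb
    · rw [signed_pow_of_nonpos hγ0.ne' ha.le, signed_pow_of_nonpos hγ0.ne' hb,
        abs_of_neg ha, abs_of_nonpos hb]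
      have := case1 hγ0 hγ1 (neg_nonneg.mpr hb) (by linarith : -b ≤ -a)
      calc γ * (b - a) * (-a + -b) ^ (γ - 1)
          = γ * (-a - -b) * (-b + -a) ^ (γ - 1) := by ring_nf
        _ ≤ (-a) ^ γ - (-b) ^ γ := this
        _ = -((-b) ^ γ) - -((-a) ^ γ) := by ring
    · -- a < 0 < b
      rw [signed_pow_of_nonpos hγ0.ne' ha.le, signed_pow_of_nonneg hγ0.ne' hb.le,
        abs_of_neg ha, abs_of_pos hb]
      have hba : 0 < b - a := by linarith
      have h1 : (b - a) ^ γ ≤ b ^ γ + (-a) ^ γ := by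
        have := subadd hγ0 hγ1 hb.le (neg_nonneg.mpr ha.le)
        rwa [show b + -a = b - a by ring] at this
      have h2 : γ * (b - a) * (-a + b) ^ (γ - 1) ≤ (b - a) ^ γ := by
        rw [show -a + b = b - a by ring]
        have : (b - a) * (b - a) ^ (γ - 1) = (b - a) ^ γ := by
          rw [mul_comm, ← Real.rpow_add_one hba.ne' (γ - 1)]; ring_nf
        calc γ * (b - a) * (b - a) ^ (γ - 1)
            ≤ 1 * ((b - a) * (b - a) ^ (γ - 1)) := by
              rw [one_mul, mul_assoc]
              exact mul_le_of_le_one_left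
                (mul_nonneg hba.le (Real.rpow_nonneg hba.le _)) hγ1
          _ = (b - a) ^ γ := by rw [one_mul, this]
      calc γ * (b - a) * (-a + b) ^ (γ - 1) ≤ (b - a) ^ γ := h2
        _ ≤ b ^ γ + (-a) ^ γ := h1
        _ = b ^ γ - -((-a) ^ γ) := by ring

lemma core {β : ℝ} (hβ1 : 1 < β) (hβ2 : β ≤ 2) (m n k : ℝ) (hm : 0 < m) (hn : 0 < n) :
    β * (β - 1) * (m * n) * (2 * (|k| + (m + n))) ^ (β - 2)
      ≤ |(|k + n| ^ β - |k + m + n| ^ β + |k + m| ^ β - |k| ^ β)| := by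
  have hd : ∀ s : ℝ, HasDerivAt (fun s : ℝ => |s + n| ^ β - |s| ^ β)
      (β * |s + n| ^ (β - 2) * (s + n) - β * |s| ^ (β - 2) * s) s := by
    intro s
    have h1 : HasDerivAt (fun s : ℝ => |s + n| ^ β) (β * |s + n| ^ (β - 2) * (s + n) * 1) s := by
      have h0 := (hasDerivAt_abs_rpow (s + n) hβ1).comp s ((hasDerivAt_id s).add_const n)
      exact h0
    exact (h1.sub (hasDerivAt_abs_rpow s hβ1)).congr_deriv (by ring)
  obtain ⟨ξ, hξ, hsl⟩ := exists_hasDerivAt_eq_slope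
    (fun s : ℝ => |s + n| ^ β - |s| ^ β)
    (fun s => β * |s + n| ^ (β - 2) * (s + n) - β * |s| ^ (β - 2) * s)
    (by linarith : k < k + m)
    (fun x _ => (hd x).continuousAt.continuousWithinAt) (fun x _ => hd x)
  have hsl' : β * |ξ + n| ^ (β - 2) * (ξ + n) - β * |ξ| ^ (β - 2) * ξ
      = ((|k + m + n| ^ β - |k + m| ^ β) - (|k + n| ^ β - |k| ^ β)) / (k + m - k) := hsl
  rw [show k + m - k = m by ring, eq_div_iff hm.ne'] at hsl'
  -- key bound at ξ
  have hkey := key (γ := β - 1) (a := ξ) (b := ξ + n)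
    (by linarith) (by linarith) (by linarith)
  rw [show β - 1 - 1 = β - 2 by ring, show ξ + n - ξ = n by ring] at hkey
  -- bound the base
  have hb1 : |ξ| ≤ |k| + m := by
    rw [abs_le]; constructor <;> cases' abs_le.mp (le_refl |k|) with h1 h2 <;> nlinarith [hξ.1, hξ.2, neg_abs_le k, le_abs_self k]
  have hb2 : |ξ + n| ≤ |k| + m + n := by
    rw [abs_le]; constructor <;> nlinarith [hξ.1, hξ.2, neg_abs_le k, le_abs_self k]
  have hpos : 0 < |ξ| + |ξ + n| := by
    have : |(ξ + n) - ξ| ≤ |ξ + n| + |ξ| := abs_sub _ _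
    rw [show ξ + n - ξ = n by ring, abs_of_pos hn] at this
    linarith
  have hmono : (2 * (|k| + (m + n))) ^ (β - 2) ≤ (|ξ| + |ξ + n|) ^ (β - 2) := by
    apply Real.rpow_le_rpow_of_nonpos hpos (by linarith) (by linarith)
  have hchain : β * (β - 1) * n * (2 * (|k| + (m + n))) ^ (β - 2)
      ≤ β * |ξ + n| ^ (β - 2) * (ξ + n) - β * |ξ| ^ (β - 2) * ξ := by
    have h1 : (β - 1) * n * (2 * (|k| + (m + n))) ^ (β - 2)
        ≤ (β - 1) * n * (|ξ| + |ξ + n|) ^ (β - 2) := by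
      apply mul_le_mul_of_nonneg_left hmono (by nlinarith)
    calc β * (β - 1) * n * (2 * (|k| + (m + n))) ^ (β - 2)
        = β * ((β - 1) * n * (2 * (|k| + (m + n))) ^ (β - 2)) := by ring
      _ ≤ β * ((β - 1) * n * (|ξ| + |ξ + n|) ^ (β - 2)) := by
          exact mul_le_mul_of_nonneg_left h1 (by linarith)
      _ ≤ β * (|ξ + n| ^ (β - 2) * (ξ + n) - |ξ| ^ (β - 2) * ξ) :=
          mul_le_mul_of_nonneg_left hkey (by linarith)
      _ = β * |ξ + n| ^ (β - 2) * (ξ + n) - β * |ξ| ^ (β - 2) * ξ := by ring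
  have hfinal : β * (β - 1) * (m * n) * (2 * (|k| + (m + n))) ^ (β - 2)
      ≤ -(|k + n| ^ β - |k + m + n| ^ β + |k + m| ^ β - |k| ^ β) := by
    have := mul_le_mul_of_nonneg_left hchain hm.le
    nlinarith [hsl']
  exact hfinal.trans (neg_le_abs _)

lemma bridge {β : ℝ} (hβ1 : 1 < β) (hβ2 : β ≤ 2) {M N K K' : ℝ} (hM : 0 < M) (hN : 0 < N)
    (hK : 0 ≤ K) (hK' : |K'| ≤ K + M + N) :
    β * (β - 1) / 4 * (M * N / (M + N + K) ^ (2 - β))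
      ≤ β * (β - 1) * (M * N) * (2 * (|K'| + (M + N))) ^ (β - 2) := by
  set D := M + N + K with hD
  have hDpos : 0 < D := by positivity
  have hbase : 0 < 2 * (|K'| + (M + N)) := by positivity
  have hle : 2 * (|K'| + (M + N)) ≤ 4 * D := by
    have := abs_nonneg K'
    simp only [hD]; linarith
  have h1 : (4 * D) ^ (β - 2) ≤ (2 * (|K'| + (M + N))) ^ (β - 2) :=
    Real.rpow_le_rpow_of_nonpos hbase hle (by linarith)
  have h2 : (4 * D) ^ (β - 2) = 4 ^ (β - 2) * D ^ (β - 2) :=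
    Real.mul_rpow (by norm_num) hDpos.le
  have h3 : (1 : ℝ) / 4 ≤ 4 ^ (β - 2) := by
    have := Real.rpow_le_rpow_of_exponent_le (by norm_num : (1:ℝ) ≤ 4)
      (by linarith : (-1 : ℝ) ≤ β - 2)
    rwa [Real.rpow_neg_one, show ((4:ℝ))⁻¹ = 1 / 4 by norm_num] at this
  have hdiv : M * N / D ^ (2 - β) = M * N * D ^ (β - 2) := by
    rw [show 2 - β = -(β - 2) by ring, Real.rpow_neg hDpos.le, div_eq_mul_inv, inv_inv]
  rw [hdiv]
  have hDp : (0:ℝ) ≤ D ^ (β - 2) := Real.rpow_nonneg hDpos.le _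
  calc β * (β - 1) / 4 * (M * N * D ^ (β - 2))
      = β * (β - 1) * (M * N) * (1 / 4 * D ^ (β - 2)) := by ring
    _ ≤ β * (β - 1) * (M * N) * (4 ^ (β - 2) * D ^ (β - 2)) := by
        apply mul_le_mul_of_nonneg_left _ (mul_pos (mul_pos (show (0:ℝ) < β by linarith) (show (0:ℝ) < β - 1 by linarith)) (mul_pos hM hN)).le
        exact mul_le_mul_of_nonneg_right h3 hDp
    _ = β * (β - 1) * (M * N) * (4 * D) ^ (β - 2) := by rw [h2]
    _ ≤ β * (β - 1) * (M * N) * (2 * (|K'| + (M + N))) ^ (β - 2) := by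
        apply mul_le_mul_of_nonneg_left h1 (mul_pos (mul_pos (show (0:ℝ) < β by linarith) (show (0:ℝ) < β - 1 by linarith)) (mul_pos hM hN)).le
/-- Fix `α ∈ (1/2, 1]`. There is `c = c(α) > 0` such that for all `m n k : ℝ`,
`||k+n|^{2α} - |k+m+n|^{2α} + |k+m|^{2α} - |k|^{2α}| ≥ c |m||n| / (|m|+|n|+|k|)^{2-2α}`
(for `m = n = k = 0` the right-hand side is `0`, which is the value of the Lean expression
there as well). -/
theorem stmt5 (α : ℝ) (hα1 : 1 / 2 < α) (hα2 : α ≤ 1) :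
    ∃ c : ℝ, 0 < c ∧ ∀ m n k : ℝ,
      c * (|m| * |n| / (|m| + |n| + |k|) ^ (2 - 2 * α))
        ≤ abs (|k + n| ^ (2 * α) - |k + m + n| ^ (2 * α) + |k + m| ^ (2 * α)
            - |k| ^ (2 * α)) := by
  have hβ1 : 1 < 2 * α := by linarith
  have hβ2 : 2 * α ≤ 2 := by linarith
  refine ⟨2 * α * (2 * α - 1) / 4, by nlinarith, ?_⟩
  intro m n k
  rcases eq_or_ne m 0 with rfl | hm
  · simp only [abs_zero, zero_mul, zero_div, mul_zero]
    exact abs_nonneg _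
  rcases eq_or_ne n 0 with rfl | hn
  · simp only [abs_zero, mul_zero, zero_div]
    exact abs_nonneg _
  have hM : 0 < |m| := abs_pos.mpr hm
  have hN : 0 < |n| := abs_pos.mpr hn
  rcases lt_or_gt_of_ne hm with hm' | hm' <;> rcases lt_or_gt_of_ne hn with hn' | hn'
  · -- m < 0, n < 0 : use (-m, -n, k+m+n)
    have hcore := core hβ1 hβ2 (-m) (-n) (k + m + n) (by linarith) (by linarith)
    rw [show k + m + n + -n = k + m by ring, show k + m + n + -m + -n = k by ring,
      show k + m + n + -m = k + n by ring,
      show (-m) * (-n) = |m| * |n| from by rw [abs_of_neg hm', abs_of_neg hn'],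
      show -m + -n = |m| + |n| from by rw [abs_of_neg hm', abs_of_neg hn'],
      show |k + m| ^ (2 * α) - |k| ^ (2 * α) + |k + n| ^ (2 * α) - |k + m + n| ^ (2 * α)
        = |k + n| ^ (2 * α) - |k + m + n| ^ (2 * α) + |k + m| ^ (2 * α) - |k| ^ (2 * α)
        from by ring] at hcore
    refine le_trans (bridge hβ1 hβ2 hM hN (abs_nonneg k) ?_) hcore
    calc |k + m + n| ≤ |k + m| + |n| := abs_add_le _ _
      _ ≤ |k| + |m| + |n| := by linarith [abs_add_le k m]
  · -- m < 0, 0 < n : use (-m, n, k+m)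
    have hcore := core hβ1 hβ2 (-m) n (k + m) (by linarith) hn'
    rw [show k + m + -m + n = k + n by ring, show k + m + -m = k by ring,
      show (-m) * n = |m| * |n| from by rw [abs_of_neg hm', abs_of_pos hn'],
      show -m + n = |m| + |n| from by rw [abs_of_neg hm', abs_of_pos hn'],
      show |k + m + n| ^ (2 * α) - |k + n| ^ (2 * α) + |k| ^ (2 * α) - |k + m| ^ (2 * α)
        = -(|k + n| ^ (2 * α) - |k + m + n| ^ (2 * α) + |k + m| ^ (2 * α) - |k| ^ (2 * α))
        from by ring, abs_neg] at hcore
    refine le_trans (bridge hβ1 hβ2 hM hN (abs_nonneg k) ?_) hcore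
    linarith [abs_add_le k m]
  · -- 0 < m, n < 0 : use (m, -n, k+n)
    have hcore := core hβ1 hβ2 m (-n) (k + n) hm' (by linarith)
    rw [show k + n + -n = k by ring, show k + n + m + -n = k + m by ring,
      show k + n + m = k + m + n by ring,
      show m * (-n) = |m| * |n| from by rw [abs_of_pos hm', abs_of_neg hn'],
      show m + -n = |m| + |n| from by rw [abs_of_pos hm', abs_of_neg hn'],
      show |k| ^ (2 * α) - |k + m| ^ (2 * α) + |k + m + n| ^ (2 * α) - |k + n| ^ (2 * α)
        = -(|k + n| ^ (2 * α) - |k + m + n| ^ (2 * α) + |k + m| ^ (2 * α) - |k| ^ (2 * α))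
        from by ring, abs_neg] at hcore
    refine le_trans (bridge hβ1 hβ2 hM hN (abs_nonneg k) ?_) hcore
    linarith [abs_add_le k n]
  · -- 0 < m, 0 < n : direct
    have hcore := core hβ1 hβ2 m n k hm' hn'
    rw [show m * n = |m| * |n| from by rw [abs_of_pos hm', abs_of_pos hn'],
      show m + n = |m| + |n| from by rw [abs_of_pos hm', abs_of_pos hn']] at hcore
    refine le_trans (bridge hβ1 hβ2 hM hN (abs_nonneg k) ?_) hcore
    linarith [abs_nonneg k, abs_nonneg m, abs_nonneg n, le_abs_self k]
end
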